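/- In F_8[X,Y], the polynomial Y·Π_{a ∈ F_8^* \ {b}}(X - a), for any fixed b ∈ F_8^*, has exactly 19 zeros among the 22 points of the affine Klein quartic V(Y^3 + X^3Y + X) over F_8; hence its evaluation vector has Hamming weight 3. Equivalently, exactly 3 points (x,y) of the Klein quartic over F_8 satisfy x = b and y ≠ 0. -/

import Mathlib

open scoped Classical
open Polynomial Finset

noncomputable instance : Fintype (GaloisField 2 3) := Fintype.ofFinite _

local notation "F8" => GaloisField 2 3

lemma card8 : Fintype.card F8 = 8 := by
  have := GaloisField.card 2 3 (by norm_num)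
  simpa [Nat.card_eq_fintype_card] using this

lemma char2 : (2 : F8) = 0 := CharP.cast_eq_zero F8 2

lemma pow8 (x : F8) : x ^ 8 = x := by
  have := FiniteField.pow_card x; rwa [card8] at this

lemma pow7 {x : F8} (hx : x ≠ 0) : x ^ 7 = 1 := by
  have := FiniteField.pow_card_sub_one_eq_one x hx; rwa [card8] at this

noncomputable def q3 : F8[X] := X ^ 3 + X + 1

lemma q3_dvd : q3 ∣ (X ^ 8 - X : F8[X]) := by
  refine ⟨X ^ 5 + X ^ 3 + X ^ 2 + X, ?_⟩
  have h2 : (2 : F8[X]) = 0 := by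
    rw [← map_ofNat (C : F8 →+* F8[X]) 2, char2, map_zero]
  unfold q3
  linear_combination (-(X ^ 6 + X ^ 5 + X ^ 4 + X ^ 3 + X ^ 2 + X) : F8[X]) * h2

lemma big_ne_zero : (X ^ 8 - X : F8[X]) ≠ 0 :=
  FiniteField.X_pow_card_sub_X_ne_zero F8 (by norm_num)

lemma big_roots : (X ^ 8 - X : F8[X]).roots = Finset.univ.val := by
  have := FiniteField.roots_X_pow_card_sub_X F8
  rwa [card8] at this

lemma q3_ne_zero : (q3 : F8[X]) ≠ 0 := by
  intro h
  have : (q3 : F8[X]).coeff 3 = 0 := by rw [h]; simp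
  unfold q3 at this
  simp [coeff_one, coeff_X] at this

lemma q3_natDegree : (q3 : F8[X]).natDegree = 3 := by
  unfold q3; compute_degree!

lemma q3_roots_nodup : (q3 : F8[X]).roots.Nodup := by
  have h := Polynomial.roots.le_of_dvd big_ne_zero q3_dvd
  rw [big_roots] at h
  exact Multiset.nodup_of_le h Finset.univ.nodup

lemma big_splits : Splits (X ^ 8 - X : F8[X]) := by
  rw [Polynomial.splits_iff_card_roots, big_roots,
    FiniteField.X_pow_card_sub_X_natDegree_eq F8 (by norm_num : (1:ℕ) < 8)]
  simpa using card8

lemma q3_splits : Splits q3 :=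
  Polynomial.Splits.of_dvd big_splits big_ne_zero q3_dvd

lemma q3_roots_card : Multiset.card (q3 : F8[X]).roots = 3 := by
  rw [Polynomial.splits_iff_card_roots.mp q3_splits, q3_natDegree]

noncomputable def Uf : Finset F8 := (q3 : F8[X]).roots.toFinset

lemma mem_Uf {u : F8} : u ∈ Uf ↔ u ^ 3 + u + 1 = 0 := by
  rw [Uf, Multiset.mem_toFinset, Polynomial.mem_roots q3_ne_zero]
  unfold q3
  simp [IsRoot.def]

lemma card_Uf : Uf.card = 3 := by
  rw [Uf, Multiset.toFinset_card_of_nodup q3_roots_nodup, q3_roots_card]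

lemma fiber_eq (x : F8) (hx : x ≠ 0) :
    (univ.filter fun y : F8 => y ^ 3 + x ^ 3 * y + x = 0) =
      Uf.image (fun u => x ^ 5 * u) := by
  have h7 := pow7 hx
  ext y
  simp only [mem_filter, mem_univ, true_and, mem_image, mem_Uf]
  constructor
  · intro h
    refine ⟨x ^ 2 * y, ?_, ?_⟩
    · have key : (x^2*y)^3 + x^2*y + 1
          = x^6*(y^3+x^3*y+x) + (x^2*y + 1)*(1 - x^7) := by ring
      rw [h, h7] at key
      simpa using key
    · have : x^5*(x^2*y) = x^7*y := by ring
      rw [this, h7, one_mul]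
  · rintro ⟨u, hu, rfl⟩
    have key : (x^5*u)^3 + x^3*(x^5*u) + x
        = x*(u^3+u+1) + (x*u^3)*((x^7)^2 - 1) + (x*u)*(x^7 - 1) := by ring
    rw [key, h7, hu]; ring

lemma fiber_card {x : F8} (hx : x ≠ 0) :
    (univ.filter fun y : F8 => y ^ 3 + x ^ 3 * y + x = 0).card = 3 := by
  rw [fiber_eq x hx,
    Finset.card_image_of_injective _ (mul_right_injective₀ (pow_ne_zero 5 hx)), card_Uf]

lemma fiber_zero : (univ.filter fun y : F8 => y ^ 3 + (0:F8) ^ 3 * y + 0 = 0).card = 1 := by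
  have : (univ.filter fun y : F8 => y ^ 3 + (0:F8) ^ 3 * y + 0 = 0) = {0} := by
    ext y
    simp [pow_eq_zero_iff]
  rw [this, Finset.card_singleton]

lemma fiber_proj (x : F8) :
    (((univ : Finset (F8 × F8)).filter fun p => p.2 ^ 3 + p.1 ^ 3 * p.2 + p.1 = 0).filter
        fun p => p.1 = x).card
      = (univ.filter fun y : F8 => y ^ 3 + x ^ 3 * y + x = 0).card := by
  apply Finset.card_bij (fun p _ => p.2)
  · intro p hp
    simp only [mem_filter, mem_univ, true_and] at hp ⊢
    obtain ⟨hk, h1⟩ := hp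
    rw [← h1]; exact hk
  · intro p hp p' hp' h
    simp only [mem_filter] at hp hp'
    exact Prod.ext (hp.2.trans hp'.2.symm) h
  · intro y hy
    simp only [mem_filter, mem_univ, true_and] at hy
    exact ⟨(x, y), by simp [hy], rfl⟩

lemma klein_card :
    ((univ : Finset (F8 × F8)).filter fun p => p.2 ^ 3 + p.1 ^ 3 * p.2 + p.1 = 0).card = 22 := by
  rw [Finset.card_eq_sum_card_fiberwise (f := Prod.fst) (t := univ) (fun x _ => mem_univ _)]
  have : ∀ x : F8, ((((univ : Finset (F8 × F8)).filter fun p =>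
      p.2 ^ 3 + p.1 ^ 3 * p.2 + p.1 = 0).filter (fun p => p.1 = x)).card)
        = if x = 0 then 1 else 3 := by
    intro x
    rw [fiber_proj]
    by_cases hx : x = 0
    · subst hx; rw [if_pos rfl]; exact fiber_zero
    · rw [if_neg hx]; exact fiber_card hx
  rw [Finset.sum_congr rfl fun x _ => this x]
  rw [Finset.sum_ite]
  have h1 : (univ.filter fun x : F8 => x = 0) = {0} := by ext y; simp
  have h2 : (univ.filter fun x : F8 => ¬ x = 0).card = 7 := by
    have := Finset.card_filter_add_card_filter_not
      (s := (univ : Finset F8)) (p := fun x => x = 0)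
    rw [Finset.card_univ, card8, h1, Finset.card_singleton] at this
    omega
  rw [h1, Finset.sum_const, Finset.sum_const, h2, Finset.card_singleton]
  norm_num

lemma klein_b_card {b : F8} (hb : b ≠ 0) :
    ((univ : Finset (F8 × F8)).filter fun p =>
      (p.2 ^ 3 + p.1 ^ 3 * p.2 + p.1 = 0) ∧ p.1 = b).card = 3 := by
  rw [← Finset.filter_filter, fiber_proj, fiber_card hb]

lemma key_iff {b : F8} (hb : b ≠ 0) (p : F8 × F8)
    (hk : p.2 ^ 3 + p.1 ^ 3 * p.2 + p.1 = 0) :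
    (p.2 * ∏ a ∈ Finset.univ.filter (fun a : F8 => a ≠ 0 ∧ a ≠ b), (p.1 - a)) ≠ 0
      ↔ p.1 = b := by
  constructor
  · intro h
    have h2 : p.2 ≠ 0 := fun hz => h (by rw [hz, zero_mul])
    by_contra hpb
    have hp1 : p.1 ≠ 0 := by
      intro h0
      rw [h0] at hk
      apply h2
      have : p.2 ^ 3 = 0 := by linear_combination hk
      exact pow_eq_zero_iff (by norm_num) |>.mp this
    apply h
    rw [mul_eq_zero]; right
    exact Finset.prod_eq_zero (i := p.1) (by simp [hp1, hpb]) (sub_self _)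
  · intro h1
    have h2 : p.2 ≠ 0 := by
      intro hz
      rw [hz, h1] at hk
      apply hb
      linear_combination hk
    apply mul_ne_zero h2
    rw [Finset.prod_ne_zero_iff]
    intro a ha
    simp only [mem_filter, mem_univ, true_and] at ha
    rw [h1]
    exact sub_ne_zero_of_ne (Ne.symm ha.2)

/-- For any fixed `b ∈ F_8^*`, the polynomial `Y·Π_{a ∈ F_8^* \ {b}}(X - a)`
has exactly 19 zeros among the 22 points of the affine Klein quartic over `F_8`, hence its
evaluation vector has Hamming weight 3; equivalently exactly 3 points `(x,y)` of the Klein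
quartic satisfy `x = b` and `y ≠ 0`. -/
theorem stmt13 (b : GaloisField 2 3) (hb : b ≠ 0) :
    let K := GaloisField 2 3
    let klein : K × K → Prop := fun p => p.2 ^ 3 + p.1 ^ 3 * p.2 + p.1 = 0
    let f : K × K → K := fun p =>
      p.2 * ∏ a ∈ Finset.univ.filter (fun a : K => a ≠ 0 ∧ a ≠ b), (p.1 - a)
    {p : K × K | klein p}.ncard = 22 ∧
    {p : K × K | klein p ∧ f p = 0}.ncard = 19 ∧
    {p : K × K | klein p ∧ f p ≠ 0}.ncard = 3 ∧
    {p : K × K | klein p ∧ p.1 = b ∧ p.2 ≠ 0}.ncard = 3 := by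
  intro K klein f
  have hset : ∀ P : K × K → Prop, {p : K × K | P p}.ncard = (univ.filter P).card := by
    intro P
    rw [Set.ncard_eq_toFinset_card', Set.toFinset_setOf]
  have hklein : (univ.filter klein).card = 22 := klein_card
  -- set with x = b, y ≠ 0 equals set with x = b
  have hbiff : ∀ p : K × K, klein p → ((p.1 = b ∧ p.2 ≠ 0) ↔ p.1 = b) := by
    intro p hk
    constructor
    · exact fun h => h.1
    · intro h1
      refine ⟨h1, fun hz => hb ?_⟩
      simp only [klein] at hk
      rw [hz, h1] at hk
      linear_combination hk
  have hfe : (univ.filter fun p : K × K => klein p ∧ f p ≠ 0)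
      = univ.filter fun p : K × K => klein p ∧ p.1 = b := by
    apply Finset.filter_congr
    intro p _
    constructor
    · rintro ⟨hk, hf⟩; exact ⟨hk, (key_iff hb p hk).mp hf⟩
    · rintro ⟨hk, h1⟩; exact ⟨hk, (key_iff hb p hk).mpr h1⟩
  have h3 : (univ.filter fun p : K × K => klein p ∧ f p ≠ 0).card = 3 := by
    rw [hfe]; exact klein_b_card hb
  have h4 : (univ.filter fun p : K × K => klein p ∧ p.1 = b ∧ p.2 ≠ 0).card = 3 := by
    have : (univ.filter fun p : K × K => klein p ∧ p.1 = b ∧ p.2 ≠ 0)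
        = univ.filter fun p : K × K => klein p ∧ p.1 = b := by
      apply Finset.filter_congr
      intro p _
      constructor
      · rintro ⟨hk, h⟩; exact ⟨hk, (hbiff p hk).mp h⟩
      · rintro ⟨hk, h⟩; exact ⟨hk, (hbiff p hk).mpr h⟩
    rw [this]; exact klein_b_card hb
  have h2 : (univ.filter fun p : K × K => klein p ∧ f p = 0).card = 19 := by
    have hsplit := Finset.card_filter_add_card_filter_not
      (s := univ.filter klein) (p := fun p : K × K => f p = 0)
    rw [Finset.filter_filter, Finset.filter_filter, hklein] at hsplit
    have h3' : (univ.filter fun p : K × K => klein p ∧ ¬ f p = 0).card = 3 := h3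
    omega
  refine ⟨?_, ?_, ?_, ?_⟩
  · rw [hset]; exact hklein
  · rw [hset]; convert h2 using 2; exact Finset.filter_congr_decidable ..
  · rw [hset]; convert h3 using 2; exact Finset.filter_congr_decidable ..
  · rw [hset]; convert h4 using 2; exact Finset.filter_congr_decidable ..
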